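/- Let R be an associative ring and κ a regular cardinal. Every short exact sequence 0 → F → G → H → 0 of κ-flat left R-modules is a κ-filtered colimit of split short exact sequences of κ-flat left R-modules. -/

import Mathlib

open CategoryTheory CategoryTheory.Limits

universe u

/-- A category `J` is `κ`-filtered if every subdiagram of size `< κ` admits a cocone. -/
def IsCardFiltered (J : Type u) [Category.{u} J] (κ : Cardinal.{u}) : Prop :=
  ∀ (K : Type u) (_ : SmallCategory K), Cardinal.mk K < κ →
    Cardinal.mk (Σ (a : K) (b : K), a ⟶ b) < κ →
    ∀ F : K ⥤ J, Nonempty (Cocone F)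

variable {R : Type u} [Ring R]

/-- A left `R`-module is `κ`-flat if it is a `κ`-filtered colimit of projective
left `R`-modules. -/
def IsKappaFlat (κ : Cardinal.{u}) (F : ModuleCat.{u} R) : Prop :=
  ∃ (J : Type u) (_ : SmallCategory J) (_ : IsCardFiltered J κ)
    (D : J ⥤ ModuleCat.{u} R) (_ : ∀ j, Projective (D.obj j))
    (c : Cocone D) (_ : IsColimit c), Nonempty (c.pt ≅ F)

/-!
Write `H = colim P_j` over a `κ`-filtered `J` with `P_j` projective, and pull
`0 → F → G → H → 0` back along the maps `P_j → H`. Each pullback `0 → F → G ×_H P_j → P_j → 0`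
is short exact and splits because `P_j` is projective, so its middle term is `F ⊕ P_j`, again
`κ`-flat. The map from the colimit of these sequences to the original one is an isomorphism on `F`
and on `H`; since filtered colimits of modules are exact, the five lemma makes it an isomorphism.
-/

namespace CategoryTheory

lemma jointlyReflectIsomorphisms_evaluation (J C : Type*) [Category J] [Category C] :
    JointlyReflectIsomorphisms ((evaluation J C).obj ·) where
  isIso f hf := @NatIso.isIso_of_isIso_app _ _ _ _ _ _ f hf

variable {C : Type*} [Category C] [Abelian C]

namespace ShortComplex

section Colimits

variable {J : Type*} [Category J]

lemma shortExact_of_shortExact_evaluation (S : ShortComplex (J ⥤ C))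
    (hS : ∀ j, (S.map ((evaluation J C).obj j)).ShortExact) : S.ShortExact :=
  ((jointlyReflectIsomorphisms_evaluation J C).shortExact_iff S).2 hS

variable [HasColimitsOfShape J C] [HasExactColimitsOfShape J C]

lemma shortExact_colimit (F : J ⥤ ShortComplex C) (hF : ∀ j, (F.obj j).ShortExact) :
    (colimit F).ShortExact := by
  have hT : ((functorEquivalence J C).inverse.obj F).ShortExact :=
    shortExact_of_shortExact_evaluation _ hF
  refine shortExact_of_iso ?_ (hT.map_of_exact colim)
  exact (isColimitColimitCocone F).coconePointUniqueUpToIso (colimit.isColimit F)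

/-- The comparison map from `colimit F` to `c.pt` is an isomorphism on the outer terms, hence
by the five lemma an isomorphism. -/
noncomputable def isColimitOfShortExact {F : J ⥤ ShortComplex C}
    (hF : ∀ j, (F.obj j).ShortExact) (c : Cocone F) (hc : c.pt.ShortExact)
    (h₁ : IsColimit (π₁.mapCocone c)) (h₃ : IsColimit (π₃.mapCocone c)) : IsColimit c :=
  have isIso_map (G : ShortComplex C ⥤ C) [PreservesColimit F G]
      (hG : IsColimit (G.mapCocone c)) : IsIso (G.map (colimit.desc F c)) :=
    have := IsColimit.hom_isIso (isColimitOfPreserves G (colimit.isColimit F)) hG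
      (G.mapCoconeMorphism (colimit.coconeMorphism c))
    (Cocone.forget _).map_isIso (G.mapCoconeMorphism (colimit.coconeMorphism c))
  have : IsIso (colimit.desc F c).τ₁ := isIso_map π₁ h₁
  have : IsIso (colimit.desc F c).τ₃ := isIso_map π₃ h₃
  have := isIso₂_of_shortExact_of_isIso₁₃ (colimit.desc F c) (shortExact_colimit F hF) hc
  have : IsIso ((colimit.isColimit F).desc c) := isIso_of_isIso (colimit.desc F c)
  IsColimit.ofPointIso (colimit.isColimit F)

end Colimits

section Pullback

variable (S : ShortComplex C)

noncomputable abbrev pullbackAlong {Y : C} (p : Y ⟶ S.X₃) : ShortComplex C :=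
  ShortComplex.mk (pullback.lift S.f 0 (by simp)) (pullback.snd S.g p) (pullback.lift_snd _ _ _)

variable {S}

lemma ShortExact.pullbackAlong (hS : S.ShortExact) {Y : C} (p : Y ⟶ S.X₃) :
    (S.pullbackAlong p).ShortExact where
  exact := by
    rw [exact_iff_exact_up_to_refinements]
    intro A x₂ hx₂
    obtain ⟨A', π, hπ, x₁, fac⟩ := hS.exact.exact_up_to_refinements (x₂ ≫ pullback.fst _ _)
      (by rw [Category.assoc, pullback.condition, reassoc_of% hx₂, zero_comp])
    refine ⟨A', π, hπ, x₁, pullback.hom_ext ?_ ?_⟩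
    · simpa [pullback.lift_fst] using fac
    · simp [pullback.lift_snd, hx₂]
  mono_f := by
    have := hS.mono_f
    exact mono_of_mono_fac (pullback.lift_fst _ _ _)
  epi_g := by
    have := hS.epi_g
    infer_instance

variable (S) {J : Type*} [Category J] {F : J ⥤ C} (π : F ⟶ (Functor.const J).obj S.X₃)

noncomputable def pullbackDiagram : J ⥤ ShortComplex C where
  obj j := S.pullbackAlong (π.app j)
  map φ :=
    { τ₁ := 𝟙 _
      τ₂ := pullback.map _ _ _ _ (𝟙 _) (F.map φ) (𝟙 _) (by simp) (by simp)
      τ₃ := F.map φ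
      comm₁₂ := pullback.hom_ext (by simp [pullback.lift_fst])
        (by simp [pullback.lift_snd, pullback.lift_snd_assoc])
      comm₂₃ := pullback.lift_snd _ _ _ }
  map_id j := by ext <;> simp
  map_comp φ ψ := by ext <;> simp [pullback.map_comp]

noncomputable def pullbackCocone : Cocone (S.pullbackDiagram π) where
  pt := S
  ι :=
    { app j :=
        { τ₁ := 𝟙 _
          τ₂ := pullback.fst _ _
          τ₃ := π.app j
          comm₁₂ := (Category.id_comp _).trans (pullback.lift_fst _ _ _).symm
          comm₂₃ := pullback.condition }
      naturality _ _ φ := by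
        ext <;> simp
        · exact Category.id_comp _
        · exact (pullback.lift_fst _ _ _).trans (Category.comp_id _)
        · exact (π.naturality φ).trans (Category.comp_id _) }

variable {S}

noncomputable def isColimitπ₁MapCoconePullbackCocone [IsConnected J] :
    IsColimit (π₁.mapCocone (S.pullbackCocone π)) :=
  IsColimit.equivOfNatIsoOfIso
    (NatIso.ofComponents (fun _ => Iso.refl S.X₁) (fun _ => rfl) :
      (Functor.const J).obj S.X₁ ≅ S.pullbackDiagram π ⋙ π₁)
    _ (π₁.mapCocone (S.pullbackCocone π))
    (Cocone.ext (Iso.refl _) (fun _ => (Category.comp_id _).trans (Category.comp_id _)))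
    (isColimitConstCocone J S.X₁)

noncomputable def ShortExact.isColimitPullbackCocone [IsConnected J] [HasColimitsOfShape J C]
    [HasExactColimitsOfShape J C] (hS : S.ShortExact) (hπ : IsColimit (Cocone.mk S.X₃ π)) :
    IsColimit (S.pullbackCocone π) :=
  isColimitOfShortExact (fun _ => hS.pullbackAlong _) _ hS
    (isColimitπ₁MapCoconePullbackCocone π) hπ

end Pullback

end ShortComplex

end CategoryTheory

section KappaFlat

variable {κ : Cardinal.{u}}

lemma IsCardFiltered.isFiltered {J : Type u} [SmallCategory J] (hJ : IsCardFiltered J κ)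
    (hκ : Cardinal.aleph0 ≤ κ) : IsFiltered J :=
  IsFiltered.of_cocone_nonempty.{u} _ fun {K} _ _ F =>
    hJ K _ ((Cardinal.lt_aleph0_of_finite K).trans_le hκ)
      ((Cardinal.lt_aleph0_of_finite _).trans_le hκ) F

lemma isCardFiltered_discrete_punit : IsCardFiltered (Discrete PUnit.{u + 1}) κ :=
  fun _ _ _ _ F => ⟨{ pt := ⟨⟨⟩⟩, ι := { app _ := eqToHom (Subsingleton.elim _ _) } }⟩

lemma IsKappaFlat.of_iso {X Y : ModuleCat.{u} R} (hX : IsKappaFlat κ X) (e : X ≅ Y) :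
    IsKappaFlat κ Y :=
  let ⟨J, _, hJ, D, hD, c, hc, ⟨e'⟩⟩ := hX
  ⟨J, _, hJ, D, hD, c, hc, ⟨e' ≪≫ e⟩⟩

lemma isKappaFlat_of_projective (P : ModuleCat.{u} R) [Projective P] : IsKappaFlat κ P :=
  ⟨Discrete PUnit, _, isCardFiltered_discrete_punit, (Functor.const _).obj P,
    fun _ => ‹Projective P›, constCocone _ P, isColimitConstCocone _ P, ⟨Iso.refl P⟩⟩

lemma IsKappaFlat.biprod_of_projective (hκ : Cardinal.aleph0 ≤ κ) {X : ModuleCat.{u} R}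
    (hX : IsKappaFlat κ X) (P : ModuleCat.{u} R) [Projective P] : IsKappaFlat κ (X ⊞ P) := by
  obtain ⟨J, _, hJ, D, hD, c, hc, ⟨e⟩⟩ := hX
  have := hJ.isFiltered hκ
  have := IsFiltered.isConnected J
  let K := (Functor.const J).obj P
  refine ⟨J, _, hJ, D ⊞ K, fun j => ?_, colimit.cocone _, colimit.isColimit _, ⟨?_⟩⟩
  · have := hD j
    have := preservesBinaryBiproducts_of_preservesBiproducts ((evaluation J (ModuleCat R)).obj j)
    exact Projective.of_iso (((evaluation J _).obj j).mapBiprod D K).symm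
      (inferInstanceAs (Projective (D.obj j ⊞ P)))
  · have := preservesBinaryBiproducts_of_preservesBiproducts (colim (J := J) (C := ModuleCat R))
    exact colim.mapBiprod D K ≪≫ biprod.mapIso (colimit.isoColimitCocone ⟨c, hc⟩ ≪≫ e)
      (colimit.isoColimitCocone ⟨_, isColimitConstCocone J P⟩)

end KappaFlat

theorem shortExact_of_kappaFlat_is_filtered_colimit_of_split_general
    (κ : Cardinal.{u}) (hκ : κ.IsRegular)
    (S : ShortComplex (ModuleCat.{u} R)) (hS : S.ShortExact)
    (h₁ : IsKappaFlat κ S.X₁) (h₃ : IsKappaFlat κ S.X₃) :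
    ∃ (J : Type u) (_ : SmallCategory J) (_ : IsCardFiltered J κ)
      (D : J ⥤ ShortComplex (ModuleCat.{u} R))
      (_ : ∀ j, (D.obj j).ShortExact ∧ Nonempty ((D.obj j).Splitting) ∧
        IsKappaFlat κ (D.obj j).X₁ ∧ IsKappaFlat κ (D.obj j).X₂ ∧
        IsKappaFlat κ (D.obj j).X₃)
      (c : Cocone D) (_ : IsColimit c), Nonempty (c.pt ≅ S) := by
  obtain ⟨J, _, hJ, P, hP, c, hc, ⟨e⟩⟩ := h₃
  have := hJ.isFiltered hκ.aleph0_le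
  have := IsFiltered.isConnected J
  let π : P ⟶ (Functor.const J).obj S.X₃ := (c.extend e.hom).ι
  refine ⟨J, _, hJ, S.pullbackDiagram π, fun j => ?_, S.pullbackCocone π,
    hS.isColimitPullbackCocone π (IsColimit.extendIso e.hom hc), ⟨Iso.refl S⟩⟩
  have hj : ((S.pullbackDiagram π).obj j).ShortExact := hS.pullbackAlong (π.app j)
  have : Projective ((S.pullbackDiagram π).obj j).X₃ := hP j
  let s := hj.splittingOfProjective
  exact ⟨hj, ⟨s⟩, h₁, (h₁.biprod_of_projective hκ.aleph0_le _).of_iso s.isoBinaryBiproduct.symm,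
    isKappaFlat_of_projective _⟩

/-- Every short exact sequence `0 → F → G → H → 0` of `κ`-flat left `R`-modules is
a `κ`-filtered colimit of split short exact sequences of `κ`-flat left `R`-modules. -/
theorem shortExact_of_kappaFlat_is_filtered_colimit_of_split
    (κ : Cardinal.{u}) (hκ : κ.IsRegular)
    (S : ShortComplex (ModuleCat.{u} R)) (hS : S.ShortExact)
    (h₁ : IsKappaFlat κ S.X₁) (h₂ : IsKappaFlat κ S.X₂) (h₃ : IsKappaFlat κ S.X₃) :
    ∃ (J : Type u) (_ : SmallCategory J) (_ : IsCardFiltered J κ)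
      (D : J ⥤ ShortComplex (ModuleCat.{u} R))
      (_ : ∀ j, (D.obj j).ShortExact ∧ Nonempty ((D.obj j).Splitting) ∧
        IsKappaFlat κ (D.obj j).X₁ ∧ IsKappaFlat κ (D.obj j).X₂ ∧
        IsKappaFlat κ (D.obj j).X₃)
      (c : Cocone D) (_ : IsColimit c), Nonempty (c.pt ≅ S) :=
  shortExact_of_kappaFlat_is_filtered_colimit_of_split_general κ hκ S hS h₁ h₃
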